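/- Let R₁, R₂, … be independent nonnegative integer-valued random variables (number of true nulls selected by research group i) and V₁, V₂, … be random variables with 0 ≤ V_i ≤ R_i and E[V_i] ≤ α·E[R_i] for all i. Assume E[R_i²] ≤ B uniformly in i and E[R_i] ≥ δ > 0 for all i (each (V_i, R_i) pair independent across i). Then with Z_n^V = Σ_{i≤n} V_i and Z_n^R = Σ_{i≤n} R_i, we have limsup_{n→∞} Z_n^V / Z_n^R ≤ α almost surely. -/

import Mathlib

open MeasureTheory ProbabilityTheory Filter

lemma cheb_subseq {Ω : Type*} [MeasurableSpace Ω] {μ : Measure Ω} [IsProbabilityMeasure μ]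
    (X : ℕ → Ω → ℝ) (hX : ∀ i, MemLp (X i) 2 μ)
    (hpair : ∀ i j, i ≠ j → IndepFun (X i) (X j) μ)
    (B : ℝ) (hB : 0 ≤ B) (hvar : ∀ i, variance (X i) μ ≤ B) :
    ∀ᵐ ω ∂μ, ∀ ε : ℝ, 0 < ε → ∀ᶠ k : ℕ in atTop,
      |(∑ i ∈ Finset.range (k ^ 2), X i ω) - ∑ i ∈ Finset.range (k ^ 2), ∫ ω', X i ω' ∂μ|
        ≤ ε * (k : ℝ) ^ 2 := by
  have hSmem : ∀ n : ℕ, MemLp (fun ω => ∑ i ∈ Finset.range n, X i ω) 2 μ := by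
    intro n
    have h2 : (∑ i ∈ Finset.range n, X i) = fun ω => ∑ i ∈ Finset.range n, X i ω := by
      funext ω; simp
    exact h2 ▸ memLp_finset_sum' (μ := μ) (p := 2) (Finset.range n) (fun i _ => hX i)
  have hSint : ∀ n : ℕ, (∫ ω', (∑ i ∈ Finset.range n, X i ω') ∂μ)
      = ∑ i ∈ Finset.range n, ∫ ω', X i ω' ∂μ := by
    intro n
    exact integral_finset_sum _ (fun i _ => (hX i).integrable one_le_two)
  have hSvar : ∀ n : ℕ, variance (fun ω => ∑ i ∈ Finset.range n, X i ω) μ ≤ B * n := by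
    intro n
    have h1 : variance (∑ i ∈ Finset.range n, X i) μ
        = ∑ i ∈ Finset.range n, variance (X i) μ :=
      IndepFun.variance_sum (fun i _ => hX i) (fun i _ j _ hij => hpair i j hij)
    have h2 : (fun ω => ∑ i ∈ Finset.range n, X i ω) = ∑ i ∈ Finset.range n, X i := by
      funext ω; simp [Finset.sum_apply]
    rw [h2, h1]
    calc ∑ i ∈ Finset.range n, variance (X i) μ ≤ ∑ _i ∈ Finset.range n, B :=
          Finset.sum_le_sum (fun i _ => hvar i)
      _ = B * n := by simp [mul_comm]
  have key : ∀ m : ℕ, ∀ᵐ ω ∂μ, ∀ᶠ k : ℕ in atTop,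
      |(∑ i ∈ Finset.range (k ^ 2), X i ω) - ∑ i ∈ Finset.range (k ^ 2), ∫ ω', X i ω' ∂μ|
        ≤ (1 / ((m : ℝ) + 1)) * (k : ℝ) ^ 2 := by
    intro m
    have hεpos : (0 : ℝ) < 1 / ((m : ℝ) + 1) := by positivity
    set ε : ℝ := 1 / ((m : ℝ) + 1) with hε
    have htmeas : ∀ k : ℕ,
        μ {ω | ε * (((k + 1 : ℕ) : ℝ)) ^ 2 ≤
            |(∑ i ∈ Finset.range ((k + 1) ^ 2), X i ω)
              - μ[fun ω' => ∑ i ∈ Finset.range ((k + 1) ^ 2), X i ω']|}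
          ≤ ENNReal.ofReal ((B / ε ^ 2) * (1 / ((k : ℝ) + 1) ^ 2)) := by
      intro k
      have hc : (0 : ℝ) < ε * (((k + 1 : ℕ) : ℝ)) ^ 2 := by positivity
      have h1 := meas_ge_le_variance_div_sq (μ := μ) (hSmem ((k + 1) ^ 2)) hc
      refine h1.trans (ENNReal.ofReal_le_ofReal ?_)
      have h2 : variance (fun ω => ∑ i ∈ Finset.range ((k + 1) ^ 2), X i ω) μ
          ≤ B * ((k : ℝ) + 1) ^ 2 := by
        have := hSvar ((k + 1) ^ 2)
        push_cast at this ⊢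
        linarith
      rw [div_le_iff₀ (by positivity)]
      have h3 : (B / ε ^ 2 * (1 / ((k : ℝ) + 1) ^ 2)) * (ε * (((k + 1 : ℕ) : ℝ)) ^ 2) ^ 2
          = B * ((k : ℝ) + 1) ^ 2 := by
        push_cast
        field_simp
      rw [h3]
      exact h2
    have hsum : (∑' k : ℕ, μ {ω | ε * (((k + 1 : ℕ) : ℝ)) ^ 2 ≤
            |(∑ i ∈ Finset.range ((k + 1) ^ 2), X i ω)
              - μ[fun ω' => ∑ i ∈ Finset.range ((k + 1) ^ 2), X i ω']|}) ≠ ⊤ := by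
      have hsummable : Summable (fun k : ℕ => (B / ε ^ 2) * (1 / ((k : ℝ) + 1) ^ 2)) := by
        apply Summable.mul_left
        have h := (summable_nat_add_iff (f := fun n : ℕ => 1 / (n : ℝ) ^ 2) 1).2
          (Real.summable_one_div_nat_pow.2 one_lt_two)
        simpa using h
      refine ne_top_of_le_ne_top ?_ (ENNReal.tsum_le_tsum htmeas)
      rw [← ENNReal.ofReal_tsum_of_nonneg (fun k => by positivity) hsummable]
      exact ENNReal.ofReal_ne_top
    filter_upwards [ae_eventually_notMem hsum] with ω hω
    obtain ⟨N, hN⟩ := eventually_atTop.1 hω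
    rw [eventually_atTop]
    refine ⟨N + 1, fun k hk => ?_⟩
    obtain ⟨j, rfl⟩ : ∃ j, k = j + 1 := ⟨k - 1, by omega⟩
    have := hN j (by omega)
    simp only [Set.mem_setOf_eq, not_le] at this
    have h4 : μ[fun ω' => ∑ i ∈ Finset.range ((j + 1) ^ 2), X i ω']
        = ∑ i ∈ Finset.range ((j + 1) ^ 2), ∫ ω', X i ω' ∂μ := hSint _
    rw [h4] at this
    push_cast at this ⊢
    linarith
  filter_upwards [ae_all_iff.2 key] with ω hω ε hεpos
  obtain ⟨m, hm⟩ := exists_nat_one_div_lt hεpos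
  refine (hω m).mono fun k hk => hk.trans ?_
  have : (0:ℝ) ≤ (k : ℝ) ^ 2 := by positivity
  nlinarith

set_option maxHeartbeats 1000000 in
/-- Discipline-wide error control: with independent groups, `V i` false rejections
out of `R i` true selected nulls, `0 ≤ V i ≤ R i`, `E[V i] ≤ α E[R i]`, uniformly
bounded second moments `E[R i ^ 2] ≤ B` and means bounded below `E[R i] ≥ δ > 0`,
the long-run false rejection fraction satisfies
`limsup_n (Σ_{i<n} V i) / (Σ_{i<n} R i) ≤ α` almost surely. -/
theorem stmt4 {Ω : Type*} [MeasurableSpace Ω] (μ : Measure Ω) [IsProbabilityMeasure μ]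
    (R : ℕ → Ω → ℕ) (V : ℕ → Ω → ℝ)
    (hRm : ∀ i, Measurable (R i)) (hVm : ∀ i, Measurable (V i))
    (hind : iIndepFun (fun i ω => (V i ω, R i ω)) μ)
    (hbdd : ∀ i, ∀ᵐ ω ∂μ, 0 ≤ V i ω ∧ V i ω ≤ (R i ω : ℝ))
    (hint2 : ∀ i, Integrable (fun ω => ((R i ω : ℝ)) ^ 2) μ)
    (B δ α : ℝ) (hδ : 0 < δ)
    (hmom : ∀ i, ∫ ω, ((R i ω : ℝ)) ^ 2 ∂μ ≤ B)
    (hmean : ∀ i, δ ≤ ∫ ω, (R i ω : ℝ) ∂μ)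
    (hlev : ∀ i, ∫ ω, V i ω ∂μ ≤ α * ∫ ω, (R i ω : ℝ) ∂μ) :
    ∀ᵐ ω ∂μ, limsup
      (fun n => (∑ i ∈ Finset.range n, V i ω) / (∑ i ∈ Finset.range n, (R i ω : ℝ)))
      atTop ≤ α := by
  have hRmR : ∀ i, Measurable (fun ω => (R i ω : ℝ)) := fun i =>
    measurable_from_top.comp (hRm i)
  have hR2 : ∀ i, MemLp (fun ω => (R i ω : ℝ)) 2 μ := fun i =>
    (memLp_two_iff_integrable_sq (hRmR i).aestronglyMeasurable).2 (hint2 i)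
  have hV2 : ∀ i, MemLp (V i) 2 μ := by
    intro i
    refine (hR2 i).of_le (hVm i).aestronglyMeasurable ?_
    filter_upwards [hbdd i] with ω h
    rw [Real.norm_eq_abs, Real.norm_eq_abs, abs_of_nonneg h.1,
      abs_of_nonneg (by positivity : (0:ℝ) ≤ (R i ω : ℝ))]
    exact h.2
  have hRint : ∀ i, Integrable (fun ω => (R i ω : ℝ)) μ := fun i => (hR2 i).integrable one_le_two
  have hB : 0 ≤ B := le_trans (integral_nonneg fun ω => sq_nonneg _) (hmom 0)
  have hvarR : ∀ i, variance (fun ω => (R i ω : ℝ)) μ ≤ B := by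
    intro i
    refine (variance_le_expectation_sq (hRmR i).aestronglyMeasurable).trans ?_
    simpa using hmom i
  have hvarV : ∀ i, variance (V i) μ ≤ B := by
    intro i
    refine (variance_le_expectation_sq (hVm i).aestronglyMeasurable).trans ?_
    have h1 : ∫ ω, (V i ω) ^ 2 ∂μ ≤ ∫ ω, (R i ω : ℝ) ^ 2 ∂μ := by
      apply integral_mono_ae ((hV2 i).integrable_sq) (hint2 i)
      filter_upwards [hbdd i] with ω h
      nlinarith [h.1, h.2]
    simpa using h1.trans (hmom i)
  have hindV : ∀ i j, i ≠ j → IndepFun (V i) (V j) μ := fun i j hij =>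
    ((hind.comp (fun _ (p : ℝ × ℕ) => p.1) (fun _ => measurable_fst)).indepFun hij)
  have hindR : ∀ i j, i ≠ j →
      IndepFun (fun ω => (R i ω : ℝ)) (fun ω => (R j ω : ℝ)) μ := fun i j hij =>
    ((hind.comp (fun _ (p : ℝ × ℕ) => ((p.2 : ℕ) : ℝ))
      (fun _ => measurable_from_top.comp measurable_snd)).indepFun hij)
  have AEV := cheb_subseq V hV2 hindV B hB hvarV
  have AER := cheb_subseq (fun i ω => (R i ω : ℝ)) hR2 hindR B hB hvarR
  -- mean bounds
  have hmeanUB : ∀ i, ∫ ω, (R i ω : ℝ) ∂μ ≤ B + 1 := by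
    intro i
    have h1 : ∫ ω, (R i ω : ℝ) ∂μ ≤ ∫ ω, ((R i ω : ℝ) ^ 2 + 1) ∂μ := by
      refine integral_mono (hRint i) ((hint2 i).add (integrable_const 1)) fun ω => ?_
      simp only [Pi.add_apply]
      nlinarith [sq_nonneg ((R i ω : ℝ) - 1)]
    rw [integral_add (hint2 i) (integrable_const 1)] at h1
    simp only [integral_const, measure_univ, probReal_univ, ENNReal.toReal_one, smul_eq_mul, one_mul] at h1
    linarith [hmom i]
  have hα : 0 ≤ α := by
    have hV0 : 0 ≤ ∫ ω, V 0 ω ∂μ :=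
      integral_nonneg_of_ae ((hbdd 0).mono fun ω h => h.1)
    by_contra h
    push_neg at h
    have h1 := hlev 0
    have h2 := hmean 0
    nlinarith
  have hMRlb : ∀ n : ℕ, δ * n ≤ ∑ i ∈ Finset.range n, ∫ ω', (R i ω' : ℝ) ∂μ := by
    intro n
    calc δ * n = ∑ _i ∈ Finset.range n, δ := by simp [mul_comm]
      _ ≤ _ := Finset.sum_le_sum fun i _ => hmean i
  have hMV : ∀ n : ℕ, (∑ i ∈ Finset.range n, ∫ ω', V i ω' ∂μ)
      ≤ α * ∑ i ∈ Finset.range n, ∫ ω', (R i ω' : ℝ) ∂μ := by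
    intro n
    rw [Finset.mul_sum]
    exact Finset.sum_le_sum fun i _ => hlev i
  have hMRstep : ∀ a b : ℕ, a ≤ b →
      (∑ i ∈ Finset.range b, ∫ ω', (R i ω' : ℝ) ∂μ)
        ≤ (∑ i ∈ Finset.range a, ∫ ω', (R i ω' : ℝ) ∂μ) + (B + 1) * ((b - a : ℕ) : ℝ) := by
    intro a b hab
    have hsplit : (∑ i ∈ Finset.range b, ∫ ω', (R i ω' : ℝ) ∂μ)
        = (∑ i ∈ Finset.range a, ∫ ω', (R i ω' : ℝ) ∂μ)
          + ∑ i ∈ Finset.Ico a b, ∫ ω', (R i ω' : ℝ) ∂μ := by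
      simp only [Finset.range_eq_Ico]
      exact (Finset.sum_Ico_consecutive _ (Nat.zero_le a) hab).symm
    rw [hsplit]
    have h2 : (∑ i ∈ Finset.Ico a b, ∫ ω', (R i ω' : ℝ) ∂μ)
        ≤ ∑ _i ∈ Finset.Ico a b, (B + 1) := Finset.sum_le_sum fun i _ => hmeanUB i
    simp only [Finset.sum_const, Nat.card_Ico, nsmul_eq_mul] at h2
    linarith [h2]
  filter_upwards [AEV, AER, ae_all_iff.2 hbdd] with ω hVω hRω hbd
  have hZVmono : ∀ a b : ℕ, a ≤ b →
      (∑ i ∈ Finset.range a, V i ω) ≤ ∑ i ∈ Finset.range b, V i ω := fun a b hab =>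
    Finset.sum_le_sum_of_subset_of_nonneg (Finset.range_subset_range.2 hab)
      (fun i _ _ => (hbd i).1)
  have hZRmono : ∀ a b : ℕ, a ≤ b →
      (∑ i ∈ Finset.range a, (R i ω : ℝ)) ≤ ∑ i ∈ Finset.range b, (R i ω : ℝ) := fun a b hab =>
    Finset.sum_le_sum_of_subset_of_nonneg (Finset.range_subset_range.2 hab)
      (fun i _ _ => by positivity)
  have hZVnonneg : ∀ n : ℕ, 0 ≤ ∑ i ∈ Finset.range n, V i ω := fun n =>
    Finset.sum_nonneg fun i _ => (hbd i).1
  have hZRnonneg : ∀ n : ℕ, 0 ≤ ∑ i ∈ Finset.range n, (R i ω : ℝ) := fun n =>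
    Finset.sum_nonneg fun i _ => by positivity
  have key : ∀ ε : ℝ, 0 < ε → ∀ᶠ n : ℕ in atTop,
      (∑ i ∈ Finset.range n, V i ω) / (∑ i ∈ Finset.range n, (R i ω : ℝ)) ≤ α + ε := by
    intro ε hε
    have hd : (0:ℝ) < 5 + α + ε := by linarith
    set η : ℝ := ε * δ / (2 * (5 + α + ε)) with hηdef
    have hηpos : 0 < η := by positivity
    have hηδ : η ≤ δ / 2 := by
      rw [hηdef, div_le_div_iff₀ (by positivity) (by norm_num)]
      nlinarith
    have hη2 : (4 + α + ε) * η ≤ ε * δ / 2 := by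
      rw [hηdef, mul_div_assoc', div_le_div_iff₀ (by positivity) (by norm_num)]
      nlinarith [mul_nonneg hε.le hδ.le]
    obtain ⟨K1, hK1⟩ := exists_nat_ge (6 * (α * (B + 1)) / (ε * δ))
    obtain ⟨K2, hK2⟩ := eventually_atTop.1 (hVω η hηpos)
    obtain ⟨K3, hK3⟩ := eventually_atTop.1 (hRω η hηpos)
    set K : ℕ := max (max K2 K3) (max K1 1) with hKdef
    rw [eventually_atTop]
    refine ⟨K ^ 2, fun n hn => ?_⟩
    set k : ℕ := Nat.sqrt n with hkdef
    have hkK : K ≤ k := Nat.le_sqrt'.2 hn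
    have hk1 : 1 ≤ k := le_trans (le_trans (le_max_right K1 1) (le_max_right _ _)) hkK
    have hκ1 : (1:ℝ) ≤ (k:ℝ) := by exact_mod_cast hk1
    have hn1 : k ^ 2 ≤ n := Nat.sqrt_le' n
    have hn2 : n ≤ (k + 1) ^ 2 := (Nat.lt_succ_sqrt' n).le
    -- deviation bounds
    have e1 := hK2 (k + 1)
      (le_trans (le_trans (le_max_left K2 K3) (le_max_left _ _)) (le_trans hkK (Nat.le_succ k)))
    have e2 := hK3 k (le_trans (le_trans (le_max_right K2 K3) (le_max_left _ _)) hkK)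
    have f1 : (∑ i ∈ Finset.range n, V i ω) ≤ ∑ i ∈ Finset.range ((k+1)^2), V i ω :=
      hZVmono _ _ hn2
    have f2 : (∑ i ∈ Finset.range (k^2), (R i ω : ℝ)) ≤ ∑ i ∈ Finset.range n, (R i ω : ℝ) :=
      hZRmono _ _ hn1
    set A1 : ℝ := ∑ i ∈ Finset.range ((k+1)^2), V i ω with hA1
    set M1 : ℝ := ∑ i ∈ Finset.range ((k+1)^2), ∫ ω', V i ω' ∂μ with hM1
    set A2 : ℝ := ∑ i ∈ Finset.range (k^2), (R i ω : ℝ) with hA2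
    set M2 : ℝ := ∑ i ∈ Finset.range (k^2), ∫ ω', (R i ω' : ℝ) ∂μ with hM2
    set M3 : ℝ := ∑ i ∈ Finset.range ((k+1)^2), ∫ ω', (R i ω' : ℝ) ∂μ with hM3
    set κ : ℝ := (k : ℝ) with hκ
    have f3 : A1 - M1 ≤ η * (κ + 1) ^ 2 := by
      have := (abs_le.1 e1).2
      push_cast at this
      linarith
    have f4a : A2 - M2 ≤ η * κ ^ 2 := (abs_le.1 e2).2
    have f4b : -(η * κ ^ 2) ≤ A2 - M2 := (abs_le.1 e2).1
    have f5 : M1 ≤ α * M3 := hMV _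
    have f6 : M3 ≤ M2 + (B + 1) * (2 * κ + 1) := by
      have h := hMRstep (k^2) ((k+1)^2) (Nat.pow_le_pow_left (Nat.le_succ k) 2)
      have hcard : (((k+1)^2 - k^2 : ℕ) : ℝ) = 2 * κ + 1 := by
        have h5 : (k+1)^2 = k^2 + (2 * k + 1) := by ring
        have h6 : (k+1)^2 - k^2 = 2 * k + 1 := by omega
        rw [h6]; push_cast; ring
      rw [hcard] at h
      exact h
    have f7 : δ * κ ^ 2 ≤ M2 := by
      have := hMRlb (k ^ 2)
      push_cast at this
      linarith
    have f8 : 6 * (α * (B + 1)) ≤ ε * δ * κ := by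
      have hKk : (K1 : ℝ) ≤ κ := by
        have h9 : K1 ≤ k := le_trans (le_trans (le_max_left K1 1) (le_max_right _ _)) hkK
        rw [hκ]
        exact_mod_cast h9
      have h := le_trans hK1 hKk
      rw [div_le_iff₀ (by positivity)] at h
      nlinarith
    -- lower bound on denominator
    have hZRlb : δ / 2 * κ ^ 2 ≤ ∑ i ∈ Finset.range n, (R i ω : ℝ) := by
      have h9 := mul_le_mul_of_nonneg_right hηδ (sq_nonneg κ)
      linarith [f4b, f2, f7]
    have hκsq : (0:ℝ) < κ ^ 2 := by nlinarith [hκ1]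
    have hZRpos : 0 < ∑ i ∈ Finset.range n, (R i ω : ℝ) := by nlinarith [hZRlb, hκsq]
    rw [div_le_iff₀ hZRpos]
    -- intermediate products
    have hαB : 0 ≤ α * (B + 1) := mul_nonneg hα (by linarith)
    have h3κ : (0:ℝ) ≤ 3 * κ ^ 2 - 2 * κ - 1 := by nlinarith
    have g1 : η * (κ + 1) ^ 2 ≤ 4 * (η * κ ^ 2) := by
      have h9 := mul_nonneg hηpos.le h3κ
      nlinarith [h9]
    have g2 : α * ((B + 1) * (2 * κ + 1)) ≤ ε * δ / 2 * κ ^ 2 := by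
      have h9 := mul_nonneg hαB (sub_nonneg.2 hκ1)
      have h10 := mul_le_mul_of_nonneg_right f8 (show (0:ℝ) ≤ κ by linarith)
      nlinarith [h9, h10]
    have g3 : (4 + α + ε) * η * κ ^ 2 ≤ ε * δ / 2 * κ ^ 2 :=
      mul_le_mul_of_nonneg_right hη2 (sq_nonneg κ)
    have p2 : ε * (δ * κ ^ 2) ≤ ε * M2 := mul_le_mul_of_nonneg_left f7 hε.le
    have p3 : α * M3 ≤ α * (M2 + (B + 1) * (2 * κ + 1)) := mul_le_mul_of_nonneg_left f6 hα
    have p4 : (α + ε) * (M2 - η * κ ^ 2) ≤ (α + ε) * ∑ i ∈ Finset.range n, (R i ω : ℝ) :=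
      mul_le_mul_of_nonneg_left (by linarith) (by linarith)
    linarith [f1, f3, f5, p3, g1, g2, g3, p2, p4]
  have hnonneg : ∀ᶠ n : ℕ in atTop, (0:ℝ) ≤
      (∑ i ∈ Finset.range n, V i ω) / (∑ i ∈ Finset.range n, (R i ω : ℝ)) :=
    Eventually.of_forall fun n => div_nonneg (hZVnonneg n) (hZRnonneg n)
  refine _root_.le_of_forall_pos_le_add fun ε hε => ?_
  exact limsup_le_of_le (isCoboundedUnder_le_of_eventually_le atTop hnonneg) (key ε hε)
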